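/- In the complete bipartite double-oral-auction mechanism, any maximal sequence of consecutive no-change buyer moves has length at most γ, the current number of matched pairs: each no-change buyer move raises the offer of some matched seller who is submitting the lowest offer, so after at most γ such moves the lowest offer strictly increases and no further no-change buyer move is possible. -/

import Mathlib

open Finset

/-- A market: buyers `B`, sellers `S`, trading edges `E`, valuations in `[0,1]`. -/
structure Market (B S : Type*) [Fintype B] [Fintype S] where
  E : Finset (B × S)
  valB : B → ℝ
  valS : S → ℝ
  valB_nonneg : ∀ b, 0 ≤ valB b
  valB_le_one : ∀ b, valB b ≤ 1
  valS_nonneg : ∀ s, 0 ≤ valS s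
  valS_le_one : ∀ s, valS s ≤ 1

/-- A state of the market: prices submitted by buyers and sellers, and a matching. -/
structure MState (B S : Type*) where
  PB : B → ℝ
  PS : S → ℝ
  M : Finset (B × S)

variable {B S : Type*} [Fintype B] [Fintype S]

/-- `Mat` is a matching contained in the edge set. -/
def IsMatching (Mk : Market B S) (Mat : Finset (B × S)) : Prop :=
  Mat ⊆ Mk.E ∧ (∀ p ∈ Mat, ∀ q ∈ Mat, p.1 = q.1 → p = q) ∧
    (∀ p ∈ Mat, ∀ q ∈ Mat, p.2 = q.2 → p = q)

def BMatched (st : MState B S) (b : B) : Prop := ∃ s, (b, s) ∈ st.M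
def SMatched (st : MState B S) (s : S) : Prop := ∃ b, (b, s) ∈ st.M

/-- A valid state: bids below valuations, offers above opportunity costs,
and within a matched pair the bid is at least the offer. -/
def ValidState (Mk : Market B S) (st : MState B S) : Prop :=
  IsMatching Mk st.M ∧ (∀ b, st.PB b ≤ Mk.valB b) ∧ (∀ s, Mk.valS s ≤ st.PS s) ∧
    ∀ p ∈ st.M, st.PS p.2 ≤ st.PB p.1

/-- Social welfare of a matching. -/
def SW (Mk : Market B S) (Mat : Finset (B × S)) : ℝ :=
  ∑ p ∈ Mat, (Mk.valB p.1 - Mk.valS p.2)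

/-- Stable state: no bid above an offer on any edge, unmatched agents submit their
valuations, matched pairs have equal prices. -/
def IsStable (Mk : Market B S) (st : MState B S) : Prop :=
  (∀ p ∈ Mk.E, st.PB p.1 ≤ st.PS p.2) ∧
  (∀ b, ¬ BMatched st b → st.PB b = Mk.valB b) ∧
  (∀ s, ¬ SMatched st s → st.PS s = Mk.valS s) ∧
  ∀ p ∈ st.M, st.PB p.1 = st.PS p.2

/-- ε-stable state. -/
def IsEpsStable (Mk : Market B S) (ε : ℝ) (st : MState B S) : Prop :=
  (∀ p ∈ Mk.E, st.PB p.1 - st.PS p.2 ≤ ε) ∧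
  (∀ b, ¬ BMatched st b → st.PB b = Mk.valB b) ∧
  (∀ s, ¬ SMatched st s → st.PS s = Mk.valS s) ∧
  ∀ p ∈ st.M, st.PB p.1 = st.PS p.2

/-- `x` is an integer multiple of `ε`. -/
def MulEps (ε x : ℝ) : Prop := ∃ k : ℤ, x = k * ε

variable [DecidableEq B] [DecidableEq S]

/-- Seller `s` is ε-interested in buyer `b` bidding `b'`. -/
def SellerInterested (Mk : Market B S) (ε : ℝ) (st : MState B S) (b' : ℝ) (b : B) (s : S) : Prop :=
  (b, s) ∈ Mk.E ∧ ((¬ SMatched st s ∧ st.PS s ≤ b') ∨ (SMatched st s ∧ st.PS s + ε ≤ b'))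

/-- Buyer `b` is ε-interested in seller `s` offering `s'`. -/
def BuyerInterested (Mk : Market B S) (ε : ℝ) (st : MState B S) (s' : ℝ) (s : S) (b : B) : Prop :=
  (b, s) ∈ Mk.E ∧ ((¬ BMatched st b ∧ s' ≤ st.PB b) ∨ (BMatched st b ∧ s' + ε ≤ st.PB b))

/-- Increment rule for a buyer: a new bid is at most (lowest neighbouring offer + ε) and
at most the lowest offer of an unmatched neighbouring seller. -/
def BuyIncrOK (Mk : Market B S) (ε : ℝ) (st : MState B S) (b : B) (b' : ℝ) : Prop :=
  (∀ s, (b, s) ∈ Mk.E → b' ≤ st.PS s + ε) ∧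
  (∀ s, (b, s) ∈ Mk.E → ¬ SMatched st s → b' ≤ st.PS s)

/-- Increment rule for a seller. -/
def SellIncrOK (Mk : Market B S) (ε : ℝ) (st : MState B S) (s : S) (s' : ℝ) : Prop :=
  (∀ b, (b, s) ∈ Mk.E → st.PB b - ε ≤ s') ∧
  (∀ b, (b, s) ∈ Mk.E → ¬ BMatched st b → st.PB b ≤ s')

/-- Match `b` with `s` at price `price`, displacing any previous partner of `s` (resp. `b`)
and equalizing the two submitted prices. -/
def matchPair (st : MState B S) (b : B) (s : S) (price : ℝ) : MState B S where
  PB := Function.update st.PB b price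
  PS := Function.update st.PS s price
  M := insert (b, s) (st.M.filter fun p => p.1 ≠ b ∧ p.2 ≠ s)

/-- One legal move of the DOA mechanism (Mechanism 1): an arbitrary recognized unmatched
agent either submits an improving price (respecting the minimum-increment and increment
rules, when no counterpart is interested) or matches with an ε-interested counterpart,
giving priority to unmatched counterparts. -/
inductive Step (Mk : Market B S) (ε : ℝ) : MState B S → MState B S → Prop
  | buyBid (st : MState B S) (b : B) (b' : ℝ) :
      ¬ BMatched st b → st.PB b < b' → b' ≤ Mk.valB b → MulEps ε b' →
      BuyIncrOK Mk ε st b b' →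
      (∀ s, ¬ SellerInterested Mk ε st b' b s) →
      Step Mk ε st ⟨Function.update st.PB b b', st.PS, st.M⟩
  | buyMatch (st : MState B S) (b : B) (b' : ℝ) (s : S) :
      ¬ BMatched st b → st.PB b ≤ b' → b' ≤ Mk.valB b → MulEps ε b' →
      BuyIncrOK Mk ε st b b' →
      SellerInterested Mk ε st b' b s →
      ((∃ s₀, SellerInterested Mk ε st b' b s₀ ∧ ¬ SMatched st s₀) → ¬ SMatched st s) →
      Step Mk ε st (matchPair st b s b')
  | sellOffer (st : MState B S) (s : S) (s' : ℝ) :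
      ¬ SMatched st s → s' < st.PS s → Mk.valS s ≤ s' → MulEps ε s' →
      SellIncrOK Mk ε st s s' →
      (∀ b, ¬ BuyerInterested Mk ε st s' s b) →
      Step Mk ε st ⟨st.PB, Function.update st.PS s s', st.M⟩
  | sellMatch (st : MState B S) (s : S) (s' : ℝ) (b : B) :
      ¬ SMatched st s → s' ≤ st.PS s → Mk.valS s ≤ s' → MulEps ε s' →
      SellIncrOK Mk ε st s s' →
      BuyerInterested Mk ε st s' s b →
      ((∃ b₀, BuyerInterested Mk ε st s' s b₀ ∧ ¬ BMatched st b₀) → ¬ BMatched st b) →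
      Step Mk ε st (matchPair st b s s')

/-- A valid starting state: valid, bids below offers on every edge, prices in `[0,1]`
and integer multiples of `ε`. -/
def ValidStart (Mk : Market B S) (ε : ℝ) (st : MState B S) : Prop :=
  ValidState Mk st ∧ (∀ p ∈ Mk.E, st.PB p.1 ≤ st.PS p.2) ∧
  (∀ b, 0 ≤ st.PB b) ∧ (∀ s, st.PS s ≤ 1) ∧
  (∀ b, MulEps ε (st.PB b)) ∧ (∀ s, MulEps ε (st.PS s))

/-- Reachability by a sequence of legal moves. -/
def Reachable (Mk : Market B S) (ε : ℝ) : MState B S → MState B S → Prop :=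
  Relation.ReflTransGen (Step Mk ε)

/-- The potential `Φ_P = Σ_S P(S) + Σ_B (1 − P(B))`. -/
def Phi (st : MState B S) : ℝ := ∑ s : S, st.PS s + ∑ b : B, (1 - st.PB b)

/-- A no-change buyer move: an unmatched buyer overbids and steals a matched seller
while leaving the potential `Φ_P` unchanged. -/
def NoChangeBuyerMove (Mk : Market B S) (ε : ℝ) (st st' : MState B S) : Prop :=
  Step Mk ε st st' ∧ Phi st' = Phi st ∧
  ∃ (b : B) (s : S), ¬ BMatched st b ∧ SMatched st s ∧ (b, s) ∈ st'.M

/-!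
A no-change move is an unmatched buyer bidding `c + ε` for a matched seller whose offer `c`
equals his own bid. On reachable states no unmatched bid exceeds any offer (prices being
multiples of `ε`), so `c` separates the unmatched bids from the offers. The move keeps `c`
separating (the displaced buyer bids exactly `c`), leaves the set of matched sellers unchanged,
and lifts one matched seller from offer `c` to `c + ε`. Hence every move decreases the number of
matched sellers offering at most `c`, and there are at most `γ` moves.
-/

theorem MulEps.le_of_lt_add {ε x y : ℝ} (hε : 0 < ε) (hx : MulEps ε x) (hy : MulEps ε y)
    (h : x < y + ε) : x ≤ y := by
  obtain ⟨k, rfl⟩ := hx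
  obtain ⟨j, rfl⟩ := hy
  have hkj : (k : ℝ) < j + 1 := by nlinarith
  have hle : k ≤ j := Int.lt_add_one_iff.mp (by exact_mod_cast hkj)
  gcongr

theorem mulEps_update {α : Type*} [DecidableEq α] {ε v : ℝ} {g : α → ℝ}
    (hg : ∀ a, MulEps ε (g a)) (hv : MulEps ε v) (a x : α) :
    MulEps ε (Function.update g a v x) := by
  rw [Function.update_apply]
  split_ifs
  exacts [hv, hg x]

theorem Finset.sum_univ_update {α : Type*} [Fintype α] [DecidableEq α] (g : α → ℝ) (a : α)
    (v : ℝ) : ∑ x, Function.update g a v x = ∑ x, g x + (v - g a) := by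
  rw [sum_update_of_mem (mem_univ a), sum_eq_sum_sdiff_singleton_add (mem_univ a) g]
  ring

section MatchPair

variable {B S : Type*} [DecidableEq B] [DecidableEq S] {st : MState B S} {b b₁ : B} {s : S}
  {v : ℝ}

theorem mem_matchPair_M {p : B × S} :
    p ∈ (matchPair st b s v).M ↔ p = (b, s) ∨ p ∈ st.M ∧ p.1 ≠ b ∧ p.2 ≠ s := by
  simp only [matchPair, mem_insert, mem_filter]

theorem bMatched_matchPair_self : BMatched (matchPair st b s v) b :=
  ⟨s, mem_matchPair_M.2 (Or.inl rfl)⟩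

theorem not_bMatched_matchPair (h : ¬ BMatched (matchPair st b s v) b₁) :
    b₁ ≠ b ∧ (¬ BMatched st b₁ ∨ (b₁, s) ∈ st.M) := by
  have hb₁ : b₁ ≠ b := fun hb => h (hb ▸ bMatched_matchPair_self)
  refine ⟨hb₁, or_iff_not_imp_left.2 fun hmatched => ?_⟩
  obtain ⟨s₂, hs₂⟩ := not_not.1 hmatched
  by_contra hs
  have hs₂s : s₂ ≠ s := fun h' => hs (h' ▸ hs₂)
  exact h ⟨s₂, mem_matchPair_M.2 (Or.inr ⟨hs₂, hb₁, hs₂s⟩)⟩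

theorem image_snd_matchPair_M (hb : ¬ BMatched st b) (hs : SMatched st s) :
    (matchPair st b s v).M.image Prod.snd = st.M.image Prod.snd := by
  ext y
  simp only [mem_image, mem_matchPair_M, Prod.exists, Prod.mk.injEq]
  constructor
  · rintro ⟨b₂, s₂, ⟨-, rfl⟩ | ⟨hM, -, -⟩, rfl⟩
    · obtain ⟨b₃, hM⟩ := hs
      exact ⟨b₃, _, hM, rfl⟩
    · exact ⟨b₂, s₂, hM, rfl⟩
  · rintro ⟨b₂, y, hM, rfl⟩
    by_cases hy : y = s
    · exact ⟨b, y, Or.inl ⟨rfl, hy⟩, rfl⟩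
    · exact ⟨b₂, y, Or.inr ⟨hM, fun h => hb (h ▸ ⟨y, hM⟩), hy⟩, rfl⟩

theorem pairEq_matchPair (h : ∀ p ∈ st.M, st.PB p.1 = st.PS p.2) {p : B × S}
    (hp : p ∈ (matchPair st b s v).M) :
    (matchPair st b s v).PB p.1 = (matchPair st b s v).PS p.2 := by
  rcases mem_matchPair_M.1 hp with rfl | ⟨hM, hb, hs⟩
  · simp [matchPair]
  · simp [matchPair, Function.update_of_ne hb, Function.update_of_ne hs, h p hM]

variable [Fintype B] [Fintype S]

theorem Phi_matchPair : Phi (matchPair st b s v) = Phi st + (st.PB b - st.PS s) := by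
  simp only [Phi, matchPair, sum_sub_distrib, sum_univ_update]
  ring

end MatchPair

structure PriceInvariant {B S : Type*} (ε : ℝ) (st : MState B S) : Prop where
  pair_eq : ∀ p ∈ st.M, st.PB p.1 = st.PS p.2
  bid_le_offer : ∀ b, ¬ BMatched st b → ∀ s, st.PB b ≤ st.PS s
  mulEps_PB : ∀ b, MulEps ε (st.PB b)
  mulEps_PS : ∀ s, MulEps ε (st.PS s)

section Mechanism

variable {B S : Type*} [Fintype B] [Fintype S] {Mk : Market B S} {ε v : ℝ}
  {st st' : MState B S} {b : B} {s : S}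

theorem Phi_update_PB [DecidableEq B] :
    Phi ⟨Function.update st.PB b v, st.PS, st.M⟩ = Phi st - (v - st.PB b) := by
  simp only [Phi, sum_sub_distrib, sum_univ_update]
  ring

theorem Phi_update_PS [DecidableEq S] :
    Phi ⟨st.PB, Function.update st.PS s v, st.M⟩ = Phi st + (v - st.PS s) := by
  simp only [Phi, sum_univ_update]
  ring

theorem PriceInvariant.of_validStart (hE : Mk.E = univ) (h : ValidStart Mk ε st) :
    PriceInvariant ε st where
  pair_eq p hp := le_antisymm (h.2.1 p (hE ▸ mem_univ p)) (h.1.2.2.2 p hp)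
  bid_le_offer b _ s := h.2.1 (b, s) (hE ▸ mem_univ _)
  mulEps_PB := h.2.2.2.2.1
  mulEps_PS := h.2.2.2.2.2

theorem le_PS_of_not_sellerInterested (hE : Mk.E = univ) (hε : 0 < ε) (hv : MulEps ε v)
    (hs : MulEps ε (st.PS s)) (h : ¬ SellerInterested Mk ε st v b s) : v ≤ st.PS s := by
  simp only [SellerInterested, hE, mem_univ, true_and, not_or, not_and, not_le] at h
  by_cases hmatched : SMatched st s
  · exact hv.le_of_lt_add hε hs (h.2 hmatched)
  · exact (h.1 hmatched).le

theorem PriceInvariant.buyBid [DecidableEq B] (hE : Mk.E = univ) (hε : 0 < ε)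
    (hinv : PriceInvariant ε st) (hb : ¬ BMatched st b) (hv : MulEps ε v)
    (hnot : ∀ s, ¬ SellerInterested Mk ε st v b s) :
    PriceInvariant ε ⟨Function.update st.PB b v, st.PS, st.M⟩ where
  pair_eq p hp := by
    have hpb : p.1 ≠ b := fun h => hb ⟨p.2, h ▸ hp⟩
    simpa [Function.update_of_ne hpb] using hinv.pair_eq p hp
  bid_le_offer b₁ hb₁ s₁ := by
    rcases eq_or_ne b₁ b with rfl | hne
    · simpa using le_PS_of_not_sellerInterested hE hε hv (hinv.mulEps_PS s₁) (hnot s₁)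
    · simpa [Function.update_of_ne hne] using hinv.bid_le_offer b₁ hb₁ s₁
  mulEps_PB := mulEps_update hinv.mulEps_PB hv b
  mulEps_PS := hinv.mulEps_PS

theorem PriceInvariant.sellOffer [DecidableEq S] (hE : Mk.E = univ) (hinv : PriceInvariant ε st)
    (hs : ¬ SMatched st s) (hv : MulEps ε v) (hincr : SellIncrOK Mk ε st s v) :
    PriceInvariant ε ⟨st.PB, Function.update st.PS s v, st.M⟩ where
  pair_eq p hp := by
    have hps : p.2 ≠ s := fun h => hs ⟨p.1, h ▸ hp⟩
    simpa [Function.update_of_ne hps] using hinv.pair_eq p hp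
  bid_le_offer b₁ hb₁ s₁ := by
    rcases eq_or_ne s₁ s with rfl | hne
    · simpa using hincr.2 b₁ (hE ▸ mem_univ _) hb₁
    · simpa [Function.update_of_ne hne] using hinv.bid_le_offer b₁ hb₁ s₁
  mulEps_PB := hinv.mulEps_PB
  mulEps_PS := mulEps_update hinv.mulEps_PS hv s

variable [DecidableEq B] [DecidableEq S]

theorem PriceInvariant.buyMatch (hE : Mk.E = univ) (hε : 0 ≤ ε) (hinv : PriceInvariant ε st)
    (hv : MulEps ε v) (hincr : BuyIncrOK Mk ε st b v) (hint : SellerInterested Mk ε st v b s) :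
    PriceInvariant ε (matchPair st b s v) where
  pair_eq _ := pairEq_matchPair hinv.pair_eq
  bid_le_offer b₁ hb₁ s₁ := by
    have hsv : st.PS s ≤ v := by rcases hint.2 with ⟨-, h⟩ | ⟨-, h⟩ <;> linarith
    have hoffer : st.PS s₁ ≤ (matchPair st b s v).PS s₁ := by
      rcases eq_or_ne s₁ s with rfl | hne
      · simpa [matchPair] using hsv
      · simp [matchPair, Function.update_of_ne hne]
    obtain ⟨hne, hunmatched | hdisplaced⟩ := not_bMatched_matchPair hb₁
    all_goals simp only [matchPair, Function.update_of_ne hne] at hoffer ⊢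
    · exact (hinv.bid_le_offer b₁ hunmatched s₁).trans hoffer
    · -- the displaced partner of `s` bids `PS s`, the lowest offer by the increment rule
      have hmin : st.PS s ≤ st.PS s₁ := by
        have := hincr.1 s₁ (hE ▸ mem_univ _)
        have := (hint.2.resolve_left fun h => h.1 ⟨b₁, hdisplaced⟩).2
        linarith
      exact (hinv.pair_eq _ hdisplaced).trans_le (hmin.trans hoffer)
  mulEps_PB := mulEps_update hinv.mulEps_PB hv b
  mulEps_PS := mulEps_update hinv.mulEps_PS hv s

theorem PriceInvariant.sellMatch (hE : Mk.E = univ) (hinv : PriceInvariant ε st)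
    (hs : ¬ SMatched st s) (hv : MulEps ε v) (hincr : SellIncrOK Mk ε st s v) :
    PriceInvariant ε (matchPair st b s v) where
  pair_eq _ := pairEq_matchPair hinv.pair_eq
  bid_le_offer b₁ hb₁ s₁ := by
    obtain ⟨hne, hunmatched⟩ := not_bMatched_matchPair hb₁
    replace hunmatched := hunmatched.resolve_right fun h => hs ⟨b₁, h⟩
    simp only [matchPair, Function.update_of_ne hne]
    rcases eq_or_ne s₁ s with rfl | hne'
    · simpa using hincr.2 b₁ (hE ▸ mem_univ _) hunmatched
    · simpa [Function.update_of_ne hne'] using hinv.bid_le_offer b₁ hunmatched s₁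
  mulEps_PB := mulEps_update hinv.mulEps_PB hv b
  mulEps_PS := mulEps_update hinv.mulEps_PS hv s

theorem PriceInvariant.step (hE : Mk.E = univ) (hε : 0 < ε) (hinv : PriceInvariant ε st)
    (h : Step Mk ε st st') : PriceInvariant ε st' := by
  cases h with
  | buyBid b v hb _ _ hv _ hnot => exact hinv.buyBid hE hε hb hv hnot
  | buyMatch b v s _ _ _ hv hincr hint => exact hinv.buyMatch hE hε.le hv hincr hint
  | sellOffer s v hs _ _ hv hincr => exact hinv.sellOffer hE hs hv hincr
  | sellMatch s v b hs _ _ hv hincr => exact hinv.sellMatch hE hs hv hincr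

theorem PriceInvariant.of_reachable (hE : Mk.E = univ) (hε : 0 < ε) {st₀ : MState B S}
    (h₀ : ValidStart Mk ε st₀) (h : Reachable Mk ε st₀ st) : PriceInvariant ε st := by
  induction h with
  | refl => exact .of_validStart hE h₀
  | tail _ hstep ih => exact ih.step hE hε hstep

theorem NoChangeBuyerMove.exists_eq_matchPair (h : NoChangeBuyerMove Mk ε st st') :
    ∃ b s, ¬ BMatched st b ∧ SMatched st s ∧ st.PB b = st.PS s ∧
      st' = matchPair st b s (st.PS s + ε) := by
  obtain ⟨hstep, hPhi, b₀, s₀, hb₀, hs₀, hmem⟩ := h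
  cases hstep with
  | buyBid b v _ hlt =>
    rw [Phi_update_PB] at hPhi
    linarith
  | sellOffer s v _ hlt =>
    rw [Phi_update_PS] at hPhi
    linarith
  | sellMatch s v b hs =>
    rcases mem_matchPair_M.1 hmem with h | ⟨hM, -⟩
    · obtain ⟨-, rfl⟩ := Prod.mk.inj h
      exact absurd hs₀ hs
    · exact absurd ⟨s₀, hM⟩ hb₀
  | buyMatch b v s _ _ _ _ hincr hint =>
    rcases mem_matchPair_M.1 hmem with h | ⟨hM, -⟩
    · obtain ⟨rfl, rfl⟩ := Prod.mk.inj h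
      have hv : v = st.PS s₀ + ε :=
        le_antisymm (hincr.1 s₀ hint.1) (hint.2.resolve_left fun h => h.1 hs₀).2
      rw [Phi_matchPair] at hPhi
      exact ⟨b₀, s₀, hb₀, hs₀, by linarith, hv ▸ rfl⟩
    · exact absurd ⟨s₀, hM⟩ hb₀

end Mechanism

structure IsSeparatingPrice {B S : Type*} (st : MState B S) (c : ℝ) : Prop where
  bid_le : ∀ b, ¬ BMatched st b → st.PB b ≤ c
  le_offer : ∀ s, c ≤ st.PS s

noncomputable def lowMatchedSellers {B S : Type*} [DecidableEq S] (st : MState B S) (c : ℝ) :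
    Finset S :=
  (st.M.image Prod.snd).filter fun s => st.PS s ≤ c

theorem Finset.card_filter_update_add_one {α : Type*} [DecidableEq α] {T : Finset α}
    {g : α → ℝ} {a : α} {c v : ℝ} (ha : a ∈ T) (hga : g a ≤ c) (hcv : c < v) :
    (T.filter fun x => Function.update g a v x ≤ c).card + 1 =
      (T.filter fun x => g x ≤ c).card := by
  have herase : (T.filter fun x => Function.update g a v x ≤ c) =
      (T.filter fun x => g x ≤ c).erase a := by
    ext x
    rcases eq_or_ne x a with rfl | hne
    · simp [hcv.not_ge]
    · simp [hne]
  rw [herase, card_erase_add_one (mem_filter.2 ⟨ha, hga⟩)]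

theorem IsSeparatingPrice.matchPair {B S : Type*} [DecidableEq B] [DecidableEq S]
    {st : MState B S} {b : B} {s : S} {c ε : ℝ} (hε : 0 < ε) (hc : IsSeparatingPrice st c)
    (hpair : ∀ p ∈ st.M, st.PB p.1 = st.PS p.2) (hb : ¬ BMatched st b) (hs : SMatched st s)
    (hbs : st.PB b = st.PS s) :
    IsSeparatingPrice (matchPair st b s (st.PS s + ε)) c ∧
      (lowMatchedSellers (matchPair st b s (st.PS s + ε)) c).card + 1 =
        (lowMatchedSellers st c).card := by
  have hsc : st.PS s = c := le_antisymm (hbs ▸ hc.bid_le b hb) (hc.le_offer s)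
  refine ⟨⟨fun b₁ hb₁ => ?_, fun s₁ => ?_⟩, ?_⟩
  · obtain ⟨hne, hunmatched | hdisplaced⟩ := not_bMatched_matchPair hb₁
    all_goals simp only [_root_.matchPair, Function.update_of_ne hne]
    · exact hc.bid_le b₁ hunmatched
    · exact (hpair _ hdisplaced).trans_le hsc.le
  · rcases eq_or_ne s₁ s with rfl | hne
    · simp only [_root_.matchPair, Function.update_self]
      linarith
    · simpa [_root_.matchPair, Function.update_of_ne hne] using hc.le_offer s₁
  · obtain ⟨b₂, hb₂⟩ := hs
    rw [lowMatchedSellers, lowMatchedSellers, image_snd_matchPair_M hb ⟨b₂, hb₂⟩]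
    exact card_filter_update_add_one (mem_image_of_mem Prod.snd hb₂) hsc.le (by linarith)

section Moves

variable {Mk : Market B S} {ε c : ℝ} {st st' : MState B S}

theorem NoChangeBuyerMove.exists_isSeparatingPrice (hinv : PriceInvariant ε st)
    (h : NoChangeBuyerMove Mk ε st st') : ∃ c, IsSeparatingPrice st c := by
  obtain ⟨b, s, hb, -, hbs, -⟩ := h.exists_eq_matchPair
  exact ⟨st.PS s, fun b₁ hb₁ => hinv.bid_le_offer b₁ hb₁ s,
    fun s₁ => hbs ▸ hinv.bid_le_offer b hb s₁⟩

theorem NoChangeBuyerMove.isSeparatingPrice (hε : 0 < ε) (hinv : PriceInvariant ε st)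
    (hc : IsSeparatingPrice st c) (h : NoChangeBuyerMove Mk ε st st') :
    IsSeparatingPrice st' c ∧
      (lowMatchedSellers st' c).card + 1 = (lowMatchedSellers st c).card := by
  obtain ⟨b, s, hb, hs, hbs, rfl⟩ := h.exists_eq_matchPair
  exact hc.matchPair hε hinv.pair_eq hb hs hbs

end Moves

/-- in the complete-graph DOA mechanism, any sequence of consecutive
no-change buyer moves has length at most `γ`, the current number of matched pairs. -/
theorem no_change_buyer_moves_bounded
    (Mk : Market B S) (hE : Mk.E = Finset.univ) (ε : ℝ) (hε : 0 < ε)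
    (st₀ : MState B S) (h₀ : ValidStart Mk ε st₀)
    (f : ℕ → MState B S) (hreach : Reachable Mk ε st₀ (f 0)) (L : ℕ)
    (hsteps : ∀ t < L, NoChangeBuyerMove Mk ε (f t) (f (t + 1))) :
    L ≤ (f 0).M.card := by
  have hinv : ∀ t < L, PriceInvariant ε (f t) := by
    intro t ht
    refine .of_reachable hE hε h₀ ?_
    induction t with
    | zero => exact hreach
    | succ t ih => exact (ih (by omega)).tail (hsteps t (by omega)).1
  obtain _ | L := L
  · exact Nat.zero_le _
  obtain ⟨c, hc⟩ := (hsteps 0 L.succ_pos).exists_isSeparatingPrice (hinv 0 L.succ_pos)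
  have hcount : ∀ t ≤ L + 1, IsSeparatingPrice (f t) c ∧
      (lowMatchedSellers (f t) c).card + t = (lowMatchedSellers (f 0) c).card := by
    intro t ht
    induction t with
    | zero => exact ⟨hc, rfl⟩
    | succ t ih =>
      obtain ⟨hct, hcard⟩ := ih (by omega)
      obtain ⟨hct', hcard'⟩ := (hsteps t ht).isSeparatingPrice hε (hinv t ht) hct
      exact ⟨hct', by omega⟩
  calc L + 1 ≤ (lowMatchedSellers (f (L + 1)) c).card + (L + 1) := Nat.le_add_left _ _
    _ = (lowMatchedSellers (f 0) c).card := (hcount _ le_rfl).2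
    _ ≤ ((f 0).M.image Prod.snd).card := card_filter_le _ _
    _ ≤ (f 0).M.card := card_image_le
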